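/- arXiv:1812.05825 — 5 statements merged into one kernel-verified Lean document; each statement's English description precedes it below -/
import Mathlib

section
/- Let M be a finite nonempty set of positive integers, let p be a prime dividing some element of M, and let v be an atomic divisor of M divisible by p. Then v = v(S) where S is the subset of M consisting of the multiples of p. -/
/-- `v` is the greatest positive integer dividing every element of `S` and
coprime to every element of `M \ S`. -/
def IsAtomValue (M S : Finset ℕ) (v : ℕ) : Prop :=
  0 < v ∧ (∀ m ∈ S, v ∣ m) ∧ (∀ m ∈ M \ S, Nat.Coprime v m) ∧
    ∀ w : ℕ, 0 < w → (∀ m ∈ S, w ∣ m) → (∀ m ∈ M \ S, Nat.Coprime w m) → w ≤ v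

/-- `v` is an atomic divisor of `M`. -/
def IsAtomicDivisor (M : Finset ℕ) (v : ℕ) : Prop :=
  1 < v ∧ ∃ S : Finset ℕ, S.Nonempty ∧ S ⊆ M ∧ IsAtomValue M S v

theorem IsAtomValue.filter_dvd_eq {M S : Finset ℕ} {v d : ℕ} (hv : IsAtomValue M S v)
    (hSM : S ⊆ M) (hd : d ≠ 1) (hdv : d ∣ v) : M.filter (d ∣ ·) = S := by
  ext m
  rw [Finset.mem_filter]
  constructor
  · rintro ⟨hmM, hdm⟩
    by_contra hmS
    exact hd (Nat.eq_one_of_dvd_coprimes (hv.2.2.1 m (Finset.mem_sdiff.mpr ⟨hmM, hmS⟩)) hdv hdm)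
  · intro hmS
    exact ⟨hSM hmS, hdv.trans (hv.2.1 m hmS)⟩

theorem stmt_5_general (M : Finset ℕ)
    (p : ℕ) (hp : p.Prime)
    (v : ℕ) (hv : IsAtomicDivisor M v) (hpv : p ∣ v) :
    IsAtomValue M (M.filter (fun m => p ∣ m)) v := by
  obtain ⟨-, S, -, hSM, hS⟩ := hv
  rwa [hS.filter_dvd_eq hSM hp.ne_one hpv]

theorem stmt_5 (M : Finset ℕ) (hM : M.Nonempty) (hpos : ∀ m ∈ M, 0 < m)
    (p : ℕ) (hp : p.Prime) (hpM : ∃ m ∈ M, p ∣ m)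
    (v : ℕ) (hv : IsAtomicDivisor M v) (hpv : p ∣ v) :
    IsAtomValue M (M.filter (fun m => p ∣ m)) v :=
  stmt_5_general M p hp v hv hpv
end

section
/- Let M1 be a finite set of positive integers and let a be a positive integer with a > 1. Every atomic divisor of M1 ∪ {a} is of one of the forms gcd(v, a), the a'-part of v (i.e., v divided by the largest divisor of v all of whose prime factors divide a), or the M1'-part of a, for some atomic divisor v of M1, whenever that quantity exceeds 1. -/
/-- An atomic divisor of `M`: a maximal (w.r.t. divisibility) integer `d > 1`
dividing some element of `M` such that every element of `M` is either
divisible by `d` or coprime to `d`. -/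
def AtomicDiv (M : Finset ℕ) (d : ℕ) : Prop :=
  1 < d ∧ (∃ m ∈ M, d ∣ m) ∧ (∀ m ∈ M, d ∣ m ∨ Nat.Coprime d m) ∧
    ∀ e : ℕ, 1 < e → (∃ m ∈ M, e ∣ m) → (∀ m ∈ M, e ∣ m ∨ Nat.Coprime e m) →
      d ∣ e → d = e

/-- The `ν`-part of `r`: the greatest divisor of `r` all of whose prime
factors divide some element of `ν`. -/
def nuPart (ν : Finset ℕ) (r : ℕ) : ℕ :=
  ∏ p ∈ r.primeFactors.filter (fun p => ∃ n ∈ ν, p ∣ n), p ^ (r.factorization p)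

/-! Let `d` be an atomic divisor of `M ∪ {a}`. Unless `d` is coprime to all of `M`, it divides
some element of `M` and divides or is coprime to every element of `M`, so it divides an atomic
divisor `v` of `M` (the elements of `M` are positive, which bounds the candidates). According as
`d ∣ a`, `d` is coprime to `a`, or `d` is coprime to all of `M`, it divides `gcd v a`, the
`a'`-part of `v`, or the `M'`-part of `a`; each of these again divides or is coprime to every
element of `M ∪ {a}` and divides one of them, so maximality of `d` forces equality. -/

section NuPart

variable {ν : Finset ℕ} {r d : ℕ}

lemma nuPart_mul_prod_filter_not (hr : r ≠ 0) :
    nuPart ν r * ∏ p ∈ r.primeFactors.filter (fun p => ¬ ∃ n ∈ ν, p ∣ n),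
      p ^ r.factorization p = r := by
  rw [nuPart, Finset.prod_filter_mul_prod_filter_not]
  exact Nat.prod_factorization_pow_eq_self hr

lemma nuPart_pos : 0 < nuPart ν r :=
  Finset.prod_pos fun _ hp =>
    pow_pos (Nat.prime_of_mem_primeFactors (Finset.mem_filter.mp hp).1).pos _

lemma nuPart_dvd_self : nuPart ν r ∣ r := by
  rcases eq_or_ne r 0 with rfl | hr
  · exact dvd_zero _
  · exact Dvd.intro _ (nuPart_mul_prod_filter_not hr)

lemma div_nuPart_eq_prod_filter_not (hr : r ≠ 0) :
    r / nuPart ν r = ∏ p ∈ r.primeFactors.filter (fun p => ¬ ∃ n ∈ ν, p ∣ n),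
      p ^ r.factorization p :=
  Nat.div_eq_of_eq_mul_right nuPart_pos (nuPart_mul_prod_filter_not hr).symm

lemma coprime_div_nuPart {n : ℕ} (hn : n ∈ ν) (hr : r ≠ 0) :
    Nat.Coprime (r / nuPart ν r) n := by
  rw [div_nuPart_eq_prod_filter_not hr]
  refine Nat.Coprime.prod_left fun p hp => Nat.Coprime.pow_left _ ?_
  obtain ⟨hpr, hpν⟩ := Finset.mem_filter.mp hp
  exact (Nat.prime_of_mem_primeFactors hpr).coprime_iff_not_dvd.mpr fun hpn => hpν ⟨n, hn, hpn⟩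

lemma coprime_nuPart (hd : ∀ n ∈ ν, Nat.Coprime d n) : Nat.Coprime d (nuPart ν r) := by
  refine Nat.Coprime.prod_right fun p hp => Nat.Coprime.pow_right _ ?_
  obtain ⟨-, n, hn, hpn⟩ := Finset.mem_filter.mp hp
  exact (hd n hn).coprime_dvd_right hpn

lemma dvd_div_nuPart (hdr : d ∣ r) (hd : ∀ n ∈ ν, Nat.Coprime d n) :
    d ∣ r / nuPart ν r := by
  rw [← Nat.mul_div_cancel' (nuPart_dvd_self (ν := ν) (r := r))] at hdr
  exact (coprime_nuPart hd).dvd_of_dvd_mul_left hdr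

lemma div_nuPart_ne_zero (hr : r ≠ 0) : r / nuPart ν r ≠ 0 :=
  (Nat.div_pos (Nat.le_of_dvd (Nat.pos_of_ne_zero hr) nuPart_dvd_self) nuPart_pos).ne'

end NuPart

def IsDvdOrCoprime (M : Finset ℕ) (e : ℕ) : Prop :=
  ∀ m ∈ M, e ∣ m ∨ Nat.Coprime e m

section DvdOrCoprime

variable {M : Finset ℕ} {a d e v : ℕ}

lemma IsDvdOrCoprime.of_dvd (he : IsDvdOrCoprime M e) (hde : d ∣ e) : IsDvdOrCoprime M d :=
  fun m hm => (he m hm).imp hde.trans (Nat.Coprime.coprime_dvd_left hde)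

lemma isDvdOrCoprime_union_singleton :
    IsDvdOrCoprime (M ∪ {a}) e ↔ IsDvdOrCoprime M e ∧ (e ∣ a ∨ Nat.Coprime e a) := by
  simp only [IsDvdOrCoprime, Finset.forall_mem_union, Finset.mem_singleton, forall_eq]

lemma AtomicDiv.isDvdOrCoprime (hd : AtomicDiv M d) : IsDvdOrCoprime M d :=
  hd.2.2.1

lemma AtomicDiv.eq_of_dvd (hd : AtomicDiv M d) (he0 : e ≠ 0) (hdvd : ∃ m ∈ M, e ∣ m)
    (he : IsDvdOrCoprime M e) (hde : d ∣ e) : d = e :=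
  hd.2.2.2 e (hd.1.trans_le (Nat.le_of_dvd (Nat.pos_of_ne_zero he0) hde)) hdvd he hde

lemma exists_atomicDiv_dvd (hM : ∀ m ∈ M, 0 < m) (hd1 : 1 < d) (hdvd : ∃ m ∈ M, d ∣ m)
    (hd : IsDvdOrCoprime M d) : ∃ v, AtomicDiv M v ∧ d ∣ v := by
  classical
  let P : ℕ → Prop := fun e =>
    1 < e ∧ (∃ m ∈ M, e ∣ m) ∧ IsDvdOrCoprime M e ∧ d ∣ e
  have hbound : ∀ e, P e → e ≤ M.sup id := by
    rintro e ⟨-, ⟨m, hm, hem⟩, -⟩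
    exact (Nat.le_of_dvd (hM m hm) hem).trans (Finset.le_sup (f := id) hm)
  have hPd : P d := ⟨hd1, hdvd, hd, dvd_rfl⟩
  obtain ⟨hv1, hvdvd, hv, hdv⟩ := Nat.findGreatest_spec (hbound d hPd) hPd
  refine ⟨_, ⟨hv1, hvdvd, hv, fun e he1 hedvd he hve => ?_⟩, hdv⟩
  have hPe : P e := ⟨he1, hedvd, he, hdv.trans hve⟩
  exact le_antisymm (Nat.le_of_dvd (by omega) hve) (Nat.le_findGreatest (hbound e hPe) hPe)

end DvdOrCoprime

section AtomicDivUnion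

variable {M : Finset ℕ} {a d v : ℕ}

lemma AtomicDiv.eq_div_nuPart_of_forall_coprime (hd : AtomicDiv (M ∪ {a}) d) (ha : a ≠ 0)
    (hdM : ∀ m ∈ M, Nat.Coprime d m) : d = a / nuPart M a := by
  obtain ⟨-, hda_or⟩ := isDvdOrCoprime_union_singleton.mp hd.isDvdOrCoprime
  have hda : d ∣ a := by
    refine hda_or.resolve_right fun hcop => ?_
    obtain ⟨m, hm, hdm⟩ := hd.2.1
    rcases Finset.mem_union.mp hm with hm | hm
    · exact hd.1.ne' (Nat.Coprime.eq_one_of_dvd (hdM m hm) hdm)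
    · exact hd.1.ne' (Nat.Coprime.eq_one_of_dvd hcop (Finset.mem_singleton.mp hm ▸ hdm))
  refine hd.eq_of_dvd (div_nuPart_ne_zero ha)
    ⟨a, Finset.mem_union_right _ (Finset.mem_singleton_self a),
      Nat.div_dvd_of_dvd nuPart_dvd_self⟩
    (isDvdOrCoprime_union_singleton.mpr ⟨fun m hm => Or.inr (coprime_div_nuPart hm ha),
      Or.inl (Nat.div_dvd_of_dvd nuPart_dvd_self)⟩)
    (dvd_div_nuPart hda hdM)

lemma AtomicDiv.eq_gcd_of_dvd (hd : AtomicDiv (M ∪ {a}) d) (hv : AtomicDiv M v) (ha : a ≠ 0)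
    (hdv : d ∣ v) (hda : d ∣ a) : d = Nat.gcd v a :=
  hd.eq_of_dvd (Nat.gcd_pos_of_pos_right _ (Nat.pos_of_ne_zero ha)).ne'
    ⟨a, Finset.mem_union_right _ (Finset.mem_singleton_self a), Nat.gcd_dvd_right _ _⟩
    (isDvdOrCoprime_union_singleton.mpr
      ⟨hv.isDvdOrCoprime.of_dvd (Nat.gcd_dvd_left _ _), Or.inl (Nat.gcd_dvd_right _ _)⟩)
    (Nat.dvd_gcd hdv hda)

lemma AtomicDiv.eq_div_nuPart_of_coprime (hd : AtomicDiv (M ∪ {a}) d) (hv : AtomicDiv M v)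
    (hdv : d ∣ v) (hda : Nat.Coprime d a) : d = v / nuPart {a} v := by
  have hv0 : v ≠ 0 := (zero_lt_one.trans hv.1).ne'
  have hev : v / nuPart {a} v ∣ v := Nat.div_dvd_of_dvd nuPart_dvd_self
  obtain ⟨m, hm, hvm⟩ := hv.2.1
  refine hd.eq_of_dvd (div_nuPart_ne_zero hv0) ⟨m, Finset.mem_union_left _ hm, hev.trans hvm⟩
    (isDvdOrCoprime_union_singleton.mpr ⟨hv.isDvdOrCoprime.of_dvd hev,
      Or.inr (coprime_div_nuPart (Finset.mem_singleton_self a) hv0)⟩)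
    (dvd_div_nuPart hdv (by simpa using hda))

end AtomicDivUnion

theorem stmt_8 (M1 : Finset ℕ) (hpos : ∀ m ∈ M1, 0 < m) (a : ℕ) (ha : 1 < a)
    (d : ℕ) (hd : AtomicDiv (M1 ∪ {a}) d) :
    (∃ v : ℕ, AtomicDiv M1 v ∧ (d = Nat.gcd v a ∨ d = v / nuPart {a} v)) ∨
      d = a / nuPart M1 a := by
  have ha0 : a ≠ 0 := by omega
  by_cases hdM : ∀ m ∈ M1, Nat.Coprime d m
  · exact Or.inr (hd.eq_div_nuPart_of_forall_coprime ha0 hdM)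
  obtain ⟨m, hm, hdm⟩ := not_forall₂.mp hdM
  obtain ⟨hdM1, hdcases⟩ := isDvdOrCoprime_union_singleton.mp hd.isDvdOrCoprime
  obtain ⟨v, hv, hdv⟩ :=
    exists_atomicDiv_dvd hpos hd.1 ⟨m, hm, (hdM1 m hm).resolve_right hdm⟩ hdM1
  exact Or.inl ⟨v, hv,
    hdcases.imp (hd.eq_gcd_of_dvd hv ha0 hdv) (hd.eq_div_nuPart_of_coprime hv hdv)⟩
end

section
/- For every integer n > 1, there exists a positive integer a such that a is the order of some permutation in the alternating group A_{n+1} but a is not the order of any permutation in the alternating group A_n. -/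
/-!
Write `n + 1` as a sum `p₁ + ⋯ + p_k` of distinct odd primes; this is possible for every
`n + 1 ≥ 3` except `4, 6, 9` (strong induction, splitting off the largest prime below the
bound, which by Bertrand's postulate exceeds half of it). Disjoint cycles of these lengths give
an even permutation of `n + 1` points of order `p₁ ⋯ p_k`. Conversely, each `pᵢ` dividing the
order of a permutation divides the length of one of its cycles, and a cycle whose length is
divisible by several of the `pᵢ` is at least as long as their sum, so such a permutation moves
at least `n + 1` points.

In the exceptional cases `n = 3, 5, 8` take the orders `2, 4, 9`: an element of `A_n` of order
`2^k` with `n < 2^k + 2` would be a single `2^k`-cycle, which is odd, and order `9` needs a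
`9`-cycle.
-/

open Finset

theorem Nat.exists_finset_odd_primes_lt_nineteen_sum_eq {m : ℕ} (hm : m ∈ Icc 3 28)
    (hm' : m ∉ ({4, 6, 9} : Finset ℕ)) :
    ∃ S : Finset ℕ, (∀ p ∈ S, p.Prime ∧ Odd p ∧ p < 19) ∧ ∑ p ∈ S, p = m := by
  obtain ⟨S, hS, hsum⟩ : ∃ S ⊆ ({3, 5, 7, 11, 13, 17} : Finset ℕ), ∑ p ∈ S, p = m := by
    simpa only [← mem_powerset] using
      (by decide : ∀ m ∈ Icc 3 28, m ∉ ({4, 6, 9} : Finset ℕ) →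
        ∃ S ∈ ({3, 5, 7, 11, 13, 17} : Finset ℕ).powerset, ∑ p ∈ S, p = m) m hm hm'
  exact ⟨S, fun p hp ↦ (by decide : ∀ p ∈ ({3, 5, 7, 11, 13, 17} : Finset ℕ),
    p.Prime ∧ Odd p ∧ p < 19) p (hS hp), hsum⟩

theorem Nat.exists_prime_mem_Ico_and_le_two_mul {b q : ℕ} (hb : b.Prime) (hbq : b < q) :
    ∃ r, r.Prime ∧ r ∈ Ico b q ∧ q ≤ 2 * r := by
  have hP : ((range q).filter Nat.Prime).Nonempty := ⟨b, by simp [hbq, hb]⟩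
  set r := ((range q).filter Nat.Prime).max' hP
  obtain ⟨hrq, hr⟩ := mem_filter.mp (max'_mem _ hP)
  have hmax : ∀ s, s.Prime → s < q → s ≤ r := fun s hs hsq ↦
    le_max' _ s (mem_filter.mpr ⟨mem_range.mpr hsq, hs⟩)
  refine ⟨r, hr, mem_Ico.mpr ⟨hmax b hb hbq, mem_range.mp hrq⟩, ?_⟩
  obtain ⟨s, hs, hrs, hs2⟩ := Nat.exists_prime_lt_and_le_two_mul r hr.ne_zero
  by_contra! h
  exact absurd (hmax s hs (by omega)) (by omega)

theorem Nat.exists_finset_odd_primes_lt_sum_eq {q : ℕ} (hq19 : 19 ≤ q) {m : ℕ}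
    (hm10 : 10 ≤ m) (hmq : m ≤ q + 9) :
    ∃ S : Finset ℕ, (∀ p ∈ S, p.Prime ∧ Odd p ∧ p < q) ∧ ∑ p ∈ S, p = m := by
  induction q using Nat.strong_induction_on generalizing m with
  | _ q ih =>
    rcases hq19.eq_or_lt with rfl | h19
    · exact exists_finset_odd_primes_lt_nineteen_sum_eq (by simp; omega) (by simp; omega)
    obtain ⟨r, hr, hrIco, hqr⟩ := exists_prime_mem_Ico_and_le_two_mul (by norm_num) h19
    obtain ⟨hr19, hrq⟩ := mem_Ico.mp hrIco
    have weaken : ∀ S : Finset ℕ, (∀ p ∈ S, p.Prime ∧ Odd p ∧ p < r) →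
        ∀ p ∈ S, p.Prime ∧ Odd p ∧ p < q :=
      fun S hS p hp ↦ ⟨(hS p hp).1, (hS p hp).2.1, (hS p hp).2.2.trans hrq⟩
    by_cases hmr : m ≤ r + 9
    · obtain ⟨S, hS, hsum⟩ := ih r hrq hr19 hm10 hmr
      exact ⟨S, weaken S hS, hsum⟩
    · -- `m - r ∈ [10, r + 9]` because `q ≤ 2 r`, and its primes are all below `r`
      obtain ⟨S, hS, hsum⟩ := ih r hrq hr19 (show 10 ≤ m - r by omega) (by omega)
      have hrS : r ∉ S := fun h ↦ (hS r h).2.2.false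
      refine ⟨insert r S, ?_, by rw [sum_insert hrS, hsum]; omega⟩
      rintro p hp
      rcases mem_insert.mp hp with rfl | hp
      · exact ⟨hr, hr.odd_of_ne_two (by omega), hrq⟩
      · exact weaken S hS p hp

theorem Nat.exists_finset_odd_primes_sum_eq {m : ℕ} (hm3 : 3 ≤ m)
    (hm : m ∉ ({4, 6, 9} : Finset ℕ)) :
    ∃ S : Finset ℕ, (∀ p ∈ S, p.Prime ∧ Odd p) ∧ ∑ p ∈ S, p = m := by
  by_cases hm28 : m ≤ 28
  · obtain ⟨S, hS, hsum⟩ :=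
      exists_finset_odd_primes_lt_nineteen_sum_eq (mem_Icc.mpr ⟨hm3, hm28⟩) hm
    exact ⟨S, fun p hp ↦ ⟨(hS p hp).1, (hS p hp).2.1⟩, hsum⟩
  obtain ⟨S, hS, hsum⟩ :=
    exists_finset_odd_primes_lt_sum_eq (q := m) (by omega) (by omega) le_self_add
  exact ⟨S, fun p hp ↦ ⟨(hS p hp).1, (hS p hp).2.1⟩, hsum⟩

theorem Finset.sum_le_prod_of_two_le {ι : Type*} {s : Finset ι} {f : ι → ℕ}
    (hf : ∀ i ∈ s, 2 ≤ f i) : ∑ i ∈ s, f i ≤ ∏ i ∈ s, f i := by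
  classical
  induction s using Finset.induction_on with
  | empty => simp
  | insert a s ha ih =>
    rw [sum_insert ha, prod_insert ha]
    have ha2 := hf a (mem_insert_self a s)
    have ih := ih fun i hi ↦ hf i (mem_insert_of_mem hi)
    rcases s.eq_empty_or_nonempty with rfl | ⟨b, hb⟩
    · simp
    · have : 2 ≤ ∏ i ∈ s, f i := (hf b (mem_insert_of_mem hb)).trans <|
        single_le_prod' (fun i hi ↦ by linarith [hf i (mem_insert_of_mem hi)]) hb
      nlinarith

/-- The primes of `S` dividing a common member `x` of `N` have product, hence sum,
at most `x`. -/
theorem Finset.sum_le_sum_of_forall_prime_dvd {S : Finset ℕ} (hS : ∀ p ∈ S, p.Prime)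
    {N : Multiset ℕ} (hN : 0 ∉ N) (hdvd : ∀ p ∈ S, ∃ x ∈ N, p ∣ x) :
    ∑ p ∈ S, p ≤ N.sum := by
  induction N using Multiset.induction_on generalizing S with
  | empty => simp_all [Finset.eq_empty_of_forall_notMem]
  | cons x N ih =>
    have hx : x ≠ 0 := fun h ↦ hN (h ▸ Multiset.mem_cons_self x N)
    have hdvd_x : ∑ p ∈ S with p ∣ x, p ≤ x :=
      (sum_le_prod_of_two_le fun p hp ↦ (hS p (mem_filter.mp hp).1).two_le).trans <|
        Nat.le_of_dvd (Nat.pos_of_ne_zero hx) <| prod_primes_dvd x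
          (fun p hp ↦ (hS p (mem_filter.mp hp).1).prime) fun p hp ↦ (mem_filter.mp hp).2
    have hdvd_N : ∑ p ∈ S with ¬p ∣ x, p ≤ N.sum := by
      refine ih (fun p hp ↦ hS p (mem_filter.mp hp).1)
        (fun h ↦ hN (Multiset.mem_cons_of_mem h)) fun p hp ↦ ?_
      obtain ⟨hpS, hpx⟩ := mem_filter.mp hp
      obtain ⟨y, hy, hpy⟩ := hdvd p hpS
      rcases Multiset.mem_cons.mp hy with rfl | hy
      · exact absurd hpy hpx
      · exact ⟨y, hy, hpy⟩
    rw [← sum_filter_add_sum_filter_not S (· ∣ x), Multiset.sum_cons]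
    exact add_le_add hdvd_x hdvd_N

theorem IsPrimePow.dvd_or_dvd_of_dvd_lcm {q a b : ℕ} (hq : IsPrimePow q) (h : q ∣ a.lcm b) :
    q ∣ a ∨ q ∣ b := by
  rcases eq_or_ne a 0 with rfl | ha
  · simp
  rcases eq_or_ne b 0 with rfl | hb
  · simp
  obtain ⟨p, k, hp, -, rfl⟩ := (isPrimePow_nat_iff q).mp hq
  simp only [hp.pow_dvd_iff_le_factorization ha, hp.pow_dvd_iff_le_factorization hb,
    hp.pow_dvd_iff_le_factorization (Nat.lcm_ne_zero ha hb), Nat.factorization_lcm ha hb,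
    Finsupp.sup_apply] at h ⊢
  exact le_max_iff.mp h

theorem Multiset.exists_mem_dvd_of_isPrimePow_dvd_lcm {q : ℕ} (hq : IsPrimePow q)
    {M : Multiset ℕ} (h : q ∣ M.lcm) : ∃ x ∈ M, q ∣ x := by
  induction M using Multiset.induction_on with
  | empty => exact absurd (Nat.dvd_one.mp (by simpa using h)) hq.ne_one
  | cons a M ih =>
    rw [Multiset.lcm_cons] at h
    rcases hq.dvd_or_dvd_of_dvd_lcm h with ha | hM
    · exact ⟨a, Multiset.mem_cons_self a M, ha⟩
    · obtain ⟨x, hx, hqx⟩ := ih hM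
      exact ⟨x, Multiset.mem_cons_of_mem hx, hqx⟩

namespace Equiv.Perm

variable {α : Type*} [Fintype α] [DecidableEq α]

theorem exists_mem_cycleType_dvd_of_isPrimePow {q : ℕ} (hq : IsPrimePow q) {σ : Perm α}
    (h : q ∣ orderOf σ) : ∃ c ∈ σ.cycleType, q ∣ c :=
  Multiset.exists_mem_dvd_of_isPrimePow_dvd_lcm hq (σ.lcm_cycleType ▸ h)

theorem le_card_of_isPrimePow_dvd_orderOf {q : ℕ} (hq : IsPrimePow q) {σ : Perm α}
    (h : q ∣ orderOf σ) : q ≤ Fintype.card α := by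
  obtain ⟨c, hc, hqc⟩ := exists_mem_cycleType_dvd_of_isPrimePow hq h
  exact (Nat.le_of_dvd (zero_lt_two.trans_le (two_le_of_mem_cycleType hc)) hqc).trans <|
    (le_card_support_of_mem_cycleType hc).trans (card_le_univ _)

theorem sum_le_card_of_forall_prime_dvd_orderOf {S : Finset ℕ} (hS : ∀ p ∈ S, p.Prime)
    {σ : Perm α} (h : ∀ p ∈ S, p ∣ orderOf σ) : ∑ p ∈ S, p ≤ Fintype.card α :=
  (sum_le_sum_of_forall_prime_dvd hS (fun h0 ↦ by simpa using two_le_of_mem_cycleType h0)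
    fun p hp ↦ exists_mem_cycleType_dvd_of_isPrimePow (hS p hp).isPrimePow (h p hp)).trans
    σ.sum_cycleType_le

/-- With fewer than `q + 2` points, a permutation whose order is divisible by the prime power `q`
is a single `q`-cycle. -/
theorem sign_eq_neg_one_of_dvd_orderOf {q : ℕ} (hq : IsPrimePow q) (heven : Even q)
    (hcard : Fintype.card α < q + 2) {σ : Perm α} (h : q ∣ orderOf σ) : sign σ = -1 := by
  obtain ⟨c, hc, hqc⟩ := exists_mem_cycleType_dvd_of_isPrimePow hq h
  obtain ⟨R, hR⟩ := Multiset.exists_cons_of_mem hc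
  have hcq : c = q := by
    obtain ⟨k, rfl⟩ := hqc
    have := (le_card_support_of_mem_cycleType hc).trans (card_le_univ _)
    have := two_le_of_mem_cycleType hc
    have := hq.two_le
    rcases k with _ | _ | k <;> nlinarith
  have hR0 : R = 0 := by
    refine Multiset.eq_zero_of_forall_notMem fun y hy ↦ ?_
    have hsum := σ.sum_cycleType_le
    have h2 := two_le_of_mem_cycleType (hR ▸ Multiset.mem_cons_of_mem hy)
    have := Multiset.le_sum_of_mem hy
    rw [hR, Multiset.sum_cons] at hsum
    omega
  rw [sign_of_cycleType, hR, hR0, hcq]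
  simp [pow_succ, heven.neg_one_pow]

end Equiv.Perm

namespace alternatingGroup

variable {α : Type*} [Fintype α] [DecidableEq α]

theorem exists_orderOf_eq_lcm (M : Multiset ℕ) (h2 : ∀ x ∈ M, 2 ≤ x)
    (hpar : Even (M.sum + Multiset.card M)) (hle : M.sum ≤ Fintype.card α) :
    ∃ g : alternatingGroup α, orderOf g = M.lcm := by
  obtain ⟨σ, hσ⟩ := (Equiv.Perm.exists_with_cycleType_iff α).mpr ⟨hle, h2⟩
  have hsign : σ ∈ alternatingGroup α := by
    rw [Equiv.Perm.mem_alternatingGroup, Equiv.Perm.sign_of_cycleType, hσ, hpar.neg_one_pow]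
  exact ⟨⟨σ, hsign⟩, by rw [Subgroup.orderOf_mk, ← Equiv.Perm.lcm_cycleType, hσ]⟩

theorem not_dvd_orderOf {q : ℕ} (hq : IsPrimePow q) (heven : Even q)
    (hcard : Fintype.card α < q + 2) (g : alternatingGroup α) : ¬q ∣ orderOf g := fun h ↦ by
  have := Equiv.Perm.sign_eq_neg_one_of_dvd_orderOf hq heven hcard
    ((Subgroup.orderOf_coe g).symm ▸ h)
  rw [Equiv.Perm.mem_alternatingGroup.mp g.2] at this
  exact absurd this (by decide)

end alternatingGroup

theorem stmt_10 (n : ℕ) (hn : 1 < n) :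
    ∃ a : ℕ, (∃ g : alternatingGroup (Fin (n + 1)), orderOf g = a) ∧
      ¬(∃ g : alternatingGroup (Fin n), orderOf g = a) := by
  suffices ∃ M : Multiset ℕ, (∀ x ∈ M, 2 ≤ x) ∧ Even (M.sum + Multiset.card M) ∧
      M.sum = n + 1 ∧ ∀ g : alternatingGroup (Fin n), ¬M.lcm ∣ orderOf g by
    obtain ⟨M, h2, hpar, hsum, hM⟩ := this
    exact ⟨M.lcm, alternatingGroup.exists_orderOf_eq_lcm M h2 hpar (by simp [hsum]),
      fun ⟨g, hg⟩ ↦ hM g (hg ▸ dvd_rfl)⟩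
  obtain rfl | rfl | rfl | hn' :
      n = 3 ∨ n = 5 ∨ n = 8 ∨ n + 1 ∉ ({4, 6, 9} : Finset ℕ) := by
    simp only [mem_insert, mem_singleton]; omega
  · exact ⟨{2, 2}, by decide, by decide, rfl,
      alternatingGroup.not_dvd_orderOf (q := 2) Nat.prime_two.isPrimePow (by decide) (by simp)⟩
  · exact ⟨{4, 2}, by decide, by decide, rfl,
      alternatingGroup.not_dvd_orderOf (q := 4) (Nat.prime_two.isPrimePow.pow two_ne_zero)
        (by decide) (by simp)⟩
  · refine ⟨{9}, by decide, by decide, rfl, fun g hg ↦ ?_⟩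
    have := Equiv.Perm.le_card_of_isPrimePow_dvd_orderOf (q := 9)
      (Nat.prime_three.isPrimePow.pow two_ne_zero) ((Subgroup.orderOf_coe g).symm ▸ hg)
    exact absurd this (by simp)
  obtain ⟨S, hS, hsum⟩ := Nat.exists_finset_odd_primes_sum_eq (by omega) hn'
  refine ⟨S.val, fun p hp ↦ (hS p hp).1.two_le, ?_, S.sum_val.trans hsum, fun g hg ↦ ?_⟩
  · rw [S.sum_val, Finset.card_val, Nat.even_add, even_sum_iff_even_card_odd,
      filter_true_of_mem fun p hp ↦ show Odd (id p) from (hS p hp).2]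
  · have := Equiv.Perm.sum_le_card_of_forall_prime_dvd_orderOf (fun p hp ↦ (hS p hp).1)
      (σ := (g : Equiv.Perm (Fin n))) fun p hp ↦ by
        rw [Subgroup.orderOf_coe]; exact (Multiset.dvd_lcm hp).trans hg
    rw [Fintype.card_fin] at this
    omega
end

section
/- Let n > 6 be an integer and let p be a prime with n/2 < p ≤ n - 2. For a positive integer a coprime to p, the product p·a is the order of an element of the alternating group A_{n+1} if and only if a is the order of an element of A_{n+1-p}. -/
/-!
Since `n + 1 ≤ 2p`, every cycle of an even permutation of `n + 1` letters whose length is a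
multiple of `p` is a `p`-cycle: a `2p`-cycle would use all the letters and be odd. So an even
permutation of order `p * a` has at least one `p`-cycle, and deleting all its `p`-cycles leaves
an even permutation (each deleted cycle has odd length) of at most `n + 1 - p` letters, of
order `a`. Conversely, a `p`-cycle on `p` fresh letters multiplies an order coprime to `p` by `p`.
-/

open Equiv Multiset

/-- The cycle types of the elements of `alternatingGroup (Fin k)`; the parity condition comes
from `Perm.sign_of_cycleType`. -/
def IsAltCycleType (k : ℕ) (m : Multiset ℕ) : Prop :=
  m.sum ≤ k ∧ (∀ c ∈ m, 2 ≤ c) ∧ Even (m.sum + card m)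

theorem exists_orderOf_alternatingGroup_eq_iff (k x : ℕ) :
    (∃ g : alternatingGroup (Fin k), orderOf g = x) ↔
      ∃ m, IsAltCycleType k m ∧ m.lcm = x := by
  constructor
  · rintro ⟨g, rfl⟩
    have hsign : Perm.sign (g : Perm (Fin k)) = 1 := Perm.mem_alternatingGroup.mp g.2
    rw [Perm.sign_of_cycleType, neg_one_pow_eq_one_iff_even (by decide)] at hsign
    refine ⟨(g : Perm (Fin k)).cycleType, ⟨?_, fun c hc => Perm.two_le_of_mem_cycleType hc, hsign⟩,
      by rw [Perm.lcm_cycleType, orderOf_submonoid]⟩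
    rw [Perm.sum_cycleType]
    simpa using (g : Perm (Fin k)).support.card_le_univ
  · rintro ⟨m, ⟨hsum, htwo, heven⟩, rfl⟩
    obtain ⟨σ, hσ⟩ := (Perm.exists_with_cycleType_iff (Fin k)).mpr ⟨by simpa using hsum, htwo⟩
    have hσ_mem : σ ∈ alternatingGroup (Fin k) := by
      rw [Perm.mem_alternatingGroup, Perm.sign_of_cycleType, hσ]
      exact heven.neg_one_pow
    exact ⟨⟨σ, hσ_mem⟩, by rw [← orderOf_submonoid, ← Perm.lcm_cycleType, hσ]⟩

theorem Prime.exists_mem_multiset_dvd_of_dvd_lcm {α : Type*} [CommMonoidWithZero α]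
    [NormalizedGCDMonoid α] {p : α} (hp : Prime p) {s : Multiset α} (h : p ∣ s.lcm) :
    ∃ a ∈ s, p ∣ a :=
  hp.exists_mem_multiset_dvd (h.trans (Multiset.lcm_dvd.mpr fun _ => Multiset.dvd_prod))

section

variable {k p : ℕ} {m : Multiset ℕ}

theorem IsAltCycleType.cons (hm : IsAltCycleType k m) (hp : 2 ≤ p) (hodd : Odd p) :
    IsAltCycleType (k + p) (p ::ₘ m) := by
  obtain ⟨hsum, htwo, heven⟩ := hm
  refine ⟨by simp only [sum_cons]; omega, ?_, ?_⟩
  · simpa [hp] using htwo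
  · rw [sum_cons, card_cons, show p + m.sum + (card m + 1) = p + 1 + (m.sum + card m) by ring]
    exact hodd.add_one.add heven

theorem IsAltCycleType.eq_of_mem_of_dvd (hm : IsAltCycleType k m) (hodd : Odd p)
    (hk : k ≤ 2 * p) {x : ℕ} (hx : x ∈ m) (hpx : p ∣ x) : x = p := by
  obtain ⟨hsum, htwo, heven⟩ := hm
  obtain ⟨j, rfl⟩ := hpx
  by_contra hne
  have hj : 2 ≤ j := by
    rcases j with _ | _ | j
    · simpa using htwo _ hx
    · exact absurd (mul_one p) hne
    · omega
  have hbig : p * 2 ≤ p * j := Nat.mul_le_mul_left p hj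
  -- the other cycles would have total length `0`, so `m = {2p}`, whose parity is odd
  have hrest : card (m.erase (p * j)) * 2 ≤ (m.erase (p * j)).sum := by
    simpa using card_nsmul_le_sum (a := 2) fun c hc => htwo c (mem_of_mem_erase hc)
  have hsum_eq := sum_erase hx
  have hcard_eq := card_erase_add_one hx
  rw [Nat.even_iff] at heven
  obtain ⟨t, rfl⟩ := hodd
  omega

theorem IsAltCycleType.filter_not_dvd (hm : IsAltCycleType k m) (hodd : Odd p) (hmem : p ∈ m)
    (hdvd : ∀ x ∈ m, p ∣ x → x = p) : IsAltCycleType (k - p) (m.filter (¬ p ∣ ·)) := by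
  obtain ⟨hsum, htwo, heven⟩ := hm
  set r := card (m.filter (p ∣ ·))
  have hrep : m.filter (p ∣ ·) = replicate r p :=
    eq_replicate.mpr ⟨rfl, fun b hb => hdvd b (mem_of_mem_filter hb) (of_mem_filter hb)⟩
  have hr : p ≤ r * p := Nat.le_mul_of_pos_left p (card_pos_iff_exists_mem.mpr
    ⟨p, mem_filter.mpr ⟨hmem, dvd_rfl⟩⟩)
  have hsplit := filter_add_not (p ∣ ·) m
  have hsum_eq : r * p + (m.filter (¬ p ∣ ·)).sum = m.sum := by
    rw [← congrArg sum hsplit, sum_add, hrep, sum_replicate, smul_eq_mul]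
  have hcard_eq : r + card (m.filter (¬ p ∣ ·)) = card m := by
    rw [← congrArg card hsplit, card_add, hrep, card_replicate]
  refine ⟨by omega, fun c hc => htwo c (mem_of_mem_filter hc), ?_⟩
  have hp_cycles : Even (r * p + r) := by
    rw [← Nat.mul_succ]; exact (hodd.add_one).mul_left r
  rw [← hsum_eq, ← hcard_eq, add_add_add_comm, Nat.even_add] at heven
  exact heven.mp hp_cycles

theorem lcm_eq_mul_lcm_filter_not_dvd (hp : p.Prime) (hmem : p ∈ m)
    (hdvd : ∀ x ∈ m, p ∣ x → x = p) : m.lcm = p * (m.filter (¬ p ∣ ·)).lcm := by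
  have hlcm_multiples : (m.filter (p ∣ ·)).lcm = p := Nat.dvd_antisymm
    (Multiset.lcm_dvd.mpr fun b hb => (hdvd b (mem_of_mem_filter hb) (of_mem_filter hb)).dvd)
    (dvd_lcm (mem_filter.mpr ⟨hmem, dvd_rfl⟩))
  have hcop : p.Coprime (m.filter (¬ p ∣ ·)).lcm := by
    refine hp.coprime_iff_not_dvd.mpr fun h => ?_
    obtain ⟨x, hx, hpx⟩ := hp.prime.exists_mem_multiset_dvd_of_dvd_lcm h
    exact of_mem_filter hx hpx
  calc m.lcm = (m.filter (p ∣ ·) + m.filter (¬ p ∣ ·)).lcm := by rw [filter_add_not]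
    _ = p * (m.filter (¬ p ∣ ·)).lcm := by rw [lcm_add, hlcm_multiples, lcm_eq_nat_lcm, hcop.lcm_eq_mul]

end

theorem exists_orderOf_alternatingGroup_eq_prime_mul_iff {k p a : ℕ} (hp : p.Prime)
    (hodd : Odd p) (hpk : p ≤ k) (hk : k ≤ 2 * p) (hcop : a.Coprime p) :
    (∃ g : alternatingGroup (Fin k), orderOf g = p * a) ↔
      ∃ g : alternatingGroup (Fin (k - p)), orderOf g = a := by
  simp only [exists_orderOf_alternatingGroup_eq_iff]
  constructor
  · rintro ⟨m, hm, hlcm⟩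
    have hdvd : ∀ x ∈ m, p ∣ x → x = p := fun x hx hpx => hm.eq_of_mem_of_dvd hodd hk hx hpx
    obtain ⟨x, hx, hpx⟩ := hp.prime.exists_mem_multiset_dvd_of_dvd_lcm (hlcm ▸ dvd_mul_right p a)
    have hmem : p ∈ m := hdvd x hx hpx ▸ hx
    refine ⟨_, hm.filter_not_dvd hodd hmem hdvd, ?_⟩
    rw [lcm_eq_mul_lcm_filter_not_dvd hp hmem hdvd] at hlcm
    exact Nat.eq_of_mul_eq_mul_left hp.pos hlcm
  · rintro ⟨m, hm, rfl⟩
    refine ⟨p ::ₘ m, Nat.sub_add_cancel hpk ▸ hm.cons hp.two_le hodd, ?_⟩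
    rw [lcm_cons, lcm_eq_nat_lcm, hcop.symm.lcm_eq_mul]

theorem stmt_11_general (n : ℕ) (p : ℕ) (hp : p.Prime)
    (hlow : n < 2 * p) (hhigh : p ≤ n - 2)
    (a : ℕ) (hcop : Nat.Coprime a p) :
    (∃ g : alternatingGroup (Fin (n + 1)), orderOf g = p * a) ↔
      (∃ g : alternatingGroup (Fin (n + 1 - p)), orderOf g = a) :=
  exists_orderOf_alternatingGroup_eq_prime_mul_iff hp (hp.odd_of_ne_two (by omega)) (by omega)
    (by omega) hcop

theorem stmt_11 (n : ℕ) (hn : 6 < n) (p : ℕ) (hp : p.Prime)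
    (hlow : n < 2 * p) (hhigh : p ≤ n - 2)
    (a : ℕ) (ha : 0 < a) (hcop : Nat.Coprime a p) :
    (∃ g : alternatingGroup (Fin (n + 1)), orderOf g = p * a) ↔
      (∃ g : alternatingGroup (Fin (n + 1 - p)), orderOf g = a) :=
  stmt_11_general n p hp hlow hhigh a hcop
end

section
/- Let G be a finite group, M = ω(G) its spectrum, and for each prime r dividing |G| let φ(r) denote the unique atomic divisor of μ(G) divisible by r. Then two distinct primes r and s dividing |G| are adjacent in the prime graph GK(G) if and only if φ(r) = φ(s) or φ(r)·φ(s) ∈ ω(G). -/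
/-!
If `r * s` is an element order, it divides some `m ∈ μ(G)`. The atomic divisors through `r` and
`s` then both divide `m`; two atomic divisors are either coprime or equal (their `lcm` again
splits `μ(G)`, so maximality forces both to equal it), hence either `φ(r) = φ(s)` or
`φ(r) φ(s) ∣ m` is an element order. Conversely, `r * s` divides `φ(r) = φ(s)`, resp.
`φ(r) φ(s)`, which are element orders, and `ω(G)` is closed under divisors.
-/

/-- The spectrum of a group: the set of orders of its elements. -/
def spectrum' (G : Type*) [Group G] [Fintype G] : Set ℕ :=
  {k : ℕ | ∃ g : G, orderOf g = k}

/-- The minimal spectrum: elements of the spectrum maximal w.r.t. divisibility. -/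
def muSpectrum (G : Type*) [Group G] [Fintype G] : Set ℕ :=
  {k ∈ spectrum' G | ∀ l ∈ spectrum' G, k ∣ l → k = l}

/-- An atomic divisor of a set of positive integers: a maximal integer `d > 1`
dividing some element of the set such that every element of the set is either
a multiple of `d` or coprime to `d`. -/
def AtomicDivOfSet (M : Set ℕ) (d : ℕ) : Prop :=
  1 < d ∧ (∃ m ∈ M, d ∣ m) ∧ (∀ m ∈ M, d ∣ m ∨ Nat.Coprime d m) ∧
    ∀ e : ℕ, 1 < e → (∃ m ∈ M, e ∣ m) → (∀ m ∈ M, e ∣ m ∨ Nat.Coprime e m) →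
      d ∣ e → d = e

section Spectrum

variable {G : Type*} [Group G] [Fintype G]

lemma mem_spectrum'_of_dvd {k d : ℕ} (hk : k ∈ spectrum' G) (hd : d ∣ k) : d ∈ spectrum' G := by
  obtain ⟨g, rfl⟩ := hk
  exact ⟨g ^ (orderOf g / d), orderOf_pow_orderOf_div (orderOf_pos g).ne' hd⟩

lemma exists_mem_muSpectrum_dvd {k : ℕ} (hk : k ∈ spectrum' G) :
    ∃ m ∈ muSpectrum G, k ∣ m := by
  classical
  obtain ⟨g₀, hg₀⟩ := hk
  obtain ⟨g, hg, hmax⟩ := Finset.exists_max_image {g : G | k ∣ orderOf g} orderOf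
    ⟨g₀, by simp [hg₀]⟩
  simp only [Finset.mem_filter, Finset.mem_univ, true_and] at hg hmax
  refine ⟨orderOf g, ⟨⟨g, rfl⟩, ?_⟩, hg⟩
  rintro l ⟨h, rfl⟩ hgh
  exact le_antisymm (Nat.le_of_dvd (orderOf_pos h) hgh) (hmax h (hg.trans hgh))

end Spectrum

namespace AtomicDivOfSet

variable {M : Set ℕ} {d e q m : ℕ}

lemma dvd_of_dvd_of_dvd (hd : AtomicDivOfSet M d) (hq : 1 < q) (hqd : q ∣ d) (hm : m ∈ M)
    (hqm : q ∣ m) : d ∣ m :=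
  (hd.2.2.1 m hm).resolve_right fun hcop =>
    hq.ne' ((hcop.coprime_dvd_left hqd).eq_one_of_dvd hqm)

lemma dvd_of_not_coprime (hd : AtomicDivOfSet M d) (he : AtomicDivOfSet M e)
    (h : ¬ d.Coprime e) (hm : m ∈ M) (hdm : d ∣ m) : e ∣ m := by
  have hgcd : 1 < d.gcd e := Nat.one_lt_iff_ne_zero_and_ne_one.2
    ⟨(Nat.gcd_pos_of_pos_left e (zero_lt_one.trans hd.1)).ne', h⟩
  exact he.dvd_of_dvd_of_dvd hgcd (Nat.gcd_dvd_right d e) hm ((Nat.gcd_dvd_left d e).trans hdm)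

lemma eq_of_not_coprime (hd : AtomicDivOfSet M d) (he : AtomicDivOfSet M e)
    (h : ¬ d.Coprime e) : d = e := by
  have h' : ¬ e.Coprime d := fun hc => h hc.symm
  have hL : 1 < d.lcm e :=
    hd.1.trans_le (Nat.le_of_dvd (Nat.lcm_pos (zero_lt_one.trans hd.1) (zero_lt_one.trans he.1))
      (Nat.dvd_lcm_left d e))
  have hLex : ∃ m ∈ M, d.lcm e ∣ m := by
    obtain ⟨m, hm, hdm⟩ := hd.2.1
    exact ⟨m, hm, Nat.lcm_dvd hdm (hd.dvd_of_not_coprime he h hm hdm)⟩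
  have hLsplit : ∀ m ∈ M, d.lcm e ∣ m ∨ (d.lcm e).Coprime m := by
    intro m hm
    rcases hd.2.2.1 m hm with hdm | hdm
    · exact .inl (Nat.lcm_dvd hdm (hd.dvd_of_not_coprime he h hm hdm))
    · have hem : e.Coprime m := (he.2.2.1 m hm).resolve_left fun hem =>
        hd.1.ne' (hdm.eq_one_of_dvd (he.dvd_of_not_coprime hd h' hm hem))
      exact .inr ((hdm.mul_left hem).coprime_dvd_left (Nat.lcm_dvd_mul d e))
  calc d = d.lcm e := hd.2.2.2 _ hL hLex hLsplit (Nat.dvd_lcm_left d e)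
    _ = e := (he.2.2.2 _ hL hLex hLsplit (Nat.dvd_lcm_right d e)).symm

end AtomicDivOfSet

theorem stmt_18_general (G : Type*) [Group G] [Fintype G] (r s : ℕ)
    (hr : r.Prime) (hs : s.Prime) (hrs : r ≠ s)
    (vr vs : ℕ) (hvr : AtomicDivOfSet (muSpectrum G) vr)
    (hvs : AtomicDivOfSet (muSpectrum G) vs)
    (hrvr : r ∣ vr) (hsvs : s ∣ vs) :
    (∃ g : G, orderOf g = r * s) ↔ (vr = vs ∨ ∃ g : G, orderOf g = vr * vs) := by
  constructor
  · intro hrsω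
    obtain ⟨m, hmμ, hrsm⟩ := exists_mem_muSpectrum_dvd hrsω
    have hvrm : vr ∣ m :=
      hvr.dvd_of_dvd_of_dvd hr.one_lt hrvr hmμ ((dvd_mul_right r s).trans hrsm)
    have hvsm : vs ∣ m :=
      hvs.dvd_of_dvd_of_dvd hs.one_lt hsvs hmμ ((dvd_mul_left s r).trans hrsm)
    by_cases hco : vr.Coprime vs
    · exact .inr (mem_spectrum'_of_dvd hmμ.1 (hco.mul_dvd_of_dvd_of_dvd hvrm hvsm))
    · exact .inl (hvr.eq_of_not_coprime hvs hco)
  · have hrs_cop : r.Coprime s := (Nat.coprime_primes hr hs).2 hrs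
    rintro (rfl | hω)
    · obtain ⟨m, hmμ, hvrm⟩ := hvr.2.1
      exact mem_spectrum'_of_dvd hmμ.1 ((hrs_cop.mul_dvd_of_dvd_of_dvd hrvr hsvs).trans hvrm)
    · exact mem_spectrum'_of_dvd hω (mul_dvd_mul hrvr hsvs)

theorem stmt_18 (G : Type*) [Group G] [Fintype G] (r s : ℕ)
    (hr : r.Prime) (hs : s.Prime) (hrs : r ≠ s)
    (hrd : r ∣ Fintype.card G) (hsd : s ∣ Fintype.card G)
    (vr vs : ℕ) (hvr : AtomicDivOfSet (muSpectrum G) vr)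
    (hvs : AtomicDivOfSet (muSpectrum G) vs)
    (hrvr : r ∣ vr) (hsvs : s ∣ vs) :
    (∃ g : G, orderOf g = r * s) ↔ (vr = vs ∨ ∃ g : G, orderOf g = vr * vs) :=
  stmt_18_general G r s hr hs hrs vr vs hvr hvs hrvr hsvs
end
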